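/- Let (𝐬, r(𝐬)) ∈ 𝒮 be connected with r(𝐬) = (1, r_1, r_2) (so k = 2 and r = r_2). Then 𝐬 is stable if and only if i_{r_1−1} ≤ i_{r_1+1} < j_{r_1+1} ≤ j_{r_1−1}. In particular, if 𝐬 is stable then i_{r_1−1} ≤ i_s ≤ j_s ≤ j_{r_1−1} for all r_1 + 1 ≤ s ≤ r_2. -/

import Mathlib

namespace AltSnakePaper

/-- `[i,j] ∈ 𝕀ₙ`: the interval condition `0 ≤ j - i ≤ n + 1`. -/
def InIn (n : ℕ) (i j : ℤ) : Prop := 0 ≤ j - i ∧ j - i ≤ (n : ℤ) + 1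

/-- The intervals `[i1,j1]` and `[i2,j2]` overlap. -/
def Overlap (i1 j1 i2 j2 : ℤ) : Prop :=
  (i1 < i2 ∧ i2 ≤ j1 ∧ j1 < j2) ∨ (i2 < i1 ∧ i1 ≤ j2 ∧ j2 < j1)

/-- The pair `([i1,j1],[i2,j2])` is connected. -/
def ConnPair (n : ℕ) (i1 j1 i2 j2 : ℤ) : Prop :=
  Overlap i1 j1 i2 j2 ∧ InIn n i1 j2 ∧ InIn n i2 j1

/-- The subtuple `𝐬(a,b)` (entries with indices `a+1, …, b`) lies in `S_→`. -/
def SRight (ii jj : ℕ → ℤ) (a b : ℕ) : Prop :=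
  ∀ s, a + 1 ≤ s → s + 1 ≤ b → ii s < ii (s + 1) ∧ jj s < jj (s + 1)

/-- The subtuple `𝐬(a,b)` (entries with indices `a+1, …, b`) lies in `S_←`. -/
def SLeft (ii jj : ℕ → ℤ) (a b : ℕ) : Prop :=
  ∀ s, a + 1 ≤ s → s + 1 ≤ b → ii (s + 1) < ii s ∧ jj (s + 1) < jj s

/-- `(𝐬, r(𝐬))` is an alternating snake, where `𝐬 = ([i_1,j_1],…,[i_r,j_r])`
(encoded by `ii jj : ℕ → ℤ`, entries indexed `1,…,r`) and
`r(𝐬) = (r_0, r_1, …, r_k)` (encoded by `rr : ℕ → ℕ`). -/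
structure IsAltSnake (n r k : ℕ) (rr : ℕ → ℕ) (ii jj : ℕ → ℤ) : Prop where
  hr : 1 ≤ r
  hk : k ≤ r
  mem : ∀ s, 1 ≤ s → s ≤ r → InIn n (ii s) (jj s)
  distinct : ∀ s p, 1 ≤ s → s ≤ r → 1 ≤ p → p ≤ r → s ≠ p → ii s ≠ ii p ∨ jj s ≠ jj p
  rr0 : rr 0 = 1
  rrk : rr k = r
  rrmono : ∀ m, m < k → rr m < rr (m + 1)
  mono : ∀ m, 1 ≤ m → m ≤ k →
      SRight ii jj (rr (m - 1) - 1) (rr m) ∨ SLeft ii jj (rr (m - 1) - 1) (rr m)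
  alt : ∀ m, 1 ≤ m → m < k →
      (SRight ii jj (rr (m - 1) - 1) (rr m) ↔ SLeft ii jj (rr m - 1) (rr (m + 1)))
  nonoverlap : ∀ m s t, 1 ≤ m → m < k → 1 ≤ s → s < rr m → rr m < t → t ≤ r →
      ¬ Overlap (ii s) (jj s) (ii t) (jj t)

/-- The subtuple `𝐬(a,b)` is connected: all consecutive pairs are connected. -/
def SegConnected (n : ℕ) (ii jj : ℕ → ℤ) (a b : ℕ) : Prop :=
  ∀ s, a + 1 ≤ s → s + 1 ≤ b → ConnPair n (ii s) (jj s) (ii (s + 1)) (jj (s + 1))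

/-- The subtuple `𝐬(a,b)` (with its induced r-vector, whose internal break points
are the `rr m` with `a + 1 < rr m < b`) is prime. -/
def SegPrime (n k : ℕ) (rr : ℕ → ℕ) (ii jj : ℕ → ℤ) (a b : ℕ) : Prop :=
  SegConnected n ii jj a b ∧
    ∀ m, 1 ≤ m → m < k → a + 1 < rr m → rr m < b →
      ii (rr m - 1) ≠ ii (rr m + 1) ∧ jj (rr m - 1) ≠ jj (rr m + 1)

/-- The subtuple `𝐬(a,b)` (with its induced r-vector) is stable. -/
def SegStable (k : ℕ) (rr : ℕ → ℕ) (ii jj : ℕ → ℤ) (a b : ℕ) : Prop :=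
  ∀ m, 1 ≤ m → m < k → a + 1 < rr m → rr m < b →
    (ii (rr m + 1) < ii (rr m - 1) → jj (rr m + 1) < ii (rr m - 1)) ∧
    (jj (rr m - 1) < jj (rr m + 1) → jj (rr m - 1) < ii (rr m + 1))

/-- The alternating snake is stable. -/
def Stable (k : ℕ) (rr : ℕ → ℕ) (ii jj : ℕ → ℤ) : Prop :=
  ∀ m, 1 ≤ m → m < k →
    (ii (rr m + 1) < ii (rr m - 1) → jj (rr m + 1) < ii (rr m - 1)) ∧
    (jj (rr m - 1) < jj (rr m + 1) → jj (rr m - 1) < ii (rr m + 1))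

/-- The boundary condition allowing a cut of the snake at `p = rr m - ε`:
`a_{r_m-1} = a_{r_m+1}` for some `a ∈ {i, j}`, with `ε ∈ {0,1}` chosen so that, `b`
denoting the other member of `{i,j}`, one has `b_{r_m−1+2ε} < b_{r_m+1−2ε}` if
`𝐬(r_m−2, r_m) ∈ S_←` and `b_{r_m+1−2ε} < b_{r_m−1+2ε}` if `𝐬(r_m−2, r_m) ∈ S_→`. -/
def BoundaryCond (k : ℕ) (rr : ℕ → ℕ) (ii jj : ℕ → ℤ) (m ε : ℕ) : Prop :=
  (ii (rr m - 1) = ii (rr m + 1) ∧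
    (SLeft ii jj (rr m - 2) (rr m) → jj (rr m - 1 + 2 * ε) < jj (rr m + 1 - 2 * ε)) ∧
    (SRight ii jj (rr m - 2) (rr m) → jj (rr m + 1 - 2 * ε) < jj (rr m - 1 + 2 * ε))) ∨
  (jj (rr m - 1) = jj (rr m + 1) ∧
    (SLeft ii jj (rr m - 2) (rr m) → ii (rr m - 1 + 2 * ε) < ii (rr m + 1 - 2 * ε)) ∧
    (SRight ii jj (rr m - 2) (rr m) → ii (rr m + 1 - 2 * ε) < ii (rr m - 1 + 2 * ε)))

/-- `p` is an admissible cut point for the prime decomposition. -/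
def CutAt (n r k : ℕ) (rr : ℕ → ℕ) (ii jj : ℕ → ℤ) (p : ℕ) : Prop :=
  p = r ∨
  ¬ ConnPair n (ii p) (jj p) (ii (p + 1)) (jj (p + 1)) ∨
  ∃ m ε, 1 ≤ m ∧ m < k ∧ ε ≤ 1 ∧ p = rr m - ε ∧ BoundaryCond k rr ii jj m ε

/-- `0 = c 0 < c 1 < ⋯ < c L = r` are the cut points of a prime decomposition
of the snake, the prime factors being the segments `𝐬(c t, c (t+1))`. -/
def IsPrimeDecomp (n r k : ℕ) (rr : ℕ → ℕ) (ii jj : ℕ → ℤ) (c : ℕ → ℕ) (L : ℕ) : Prop :=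
  1 ≤ L ∧ c 0 = 0 ∧ c L = r ∧ (∀ t, t < L → c t < c (t + 1)) ∧
  (∀ t, t < L → SegPrime n k rr ii jj (c t) (c (t + 1))) ∧
  (∀ t, 1 ≤ t → t ≤ L → CutAt n r k rr ii jj (c t))

/-- The segment `𝐬(a,b)` is contained in a prime factor of `𝐬`. -/
def ContainedInPF (n r k : ℕ) (rr : ℕ → ℕ) (ii jj : ℕ → ℤ) (a b : ℕ) : Prop :=
  ∃ c L t, IsPrimeDecomp n r k rr ii jj c L ∧ t < L ∧ c t ≤ a ∧ b ≤ c (t + 1)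


/-! The two neighbours of the turning point `r₁` of the snake intersect (the middle interval
meets both of them and lies above, resp. below, both), so stability at `r₁`, which only
excludes disjoint configurations, says exactly that `[i_{r₁+1}, j_{r₁+1}]` is nested in
`[i_{r₁-1}, j_{r₁-1}]`. Along the second run each interval overlaps its predecessor but, by the
non-overlap axiom, not `[i_{r₁-1}, j_{r₁-1}]`; an interval overlapping a subinterval of `[a, b]`
without overlapping `[a, b]` lies inside `[a, b]`, so the nesting propagates to the end. -/

theorem Overlap.left_lt {i₁ j₁ i₂ j₂ : ℤ} (h : Overlap i₁ j₁ i₂ j₂) : i₁ < j₁ := by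
  unfold Overlap at h; omega

theorem Overlap.right_lt {i₁ j₁ i₂ j₂ : ℤ} (h : Overlap i₁ j₁ i₂ j₂) : i₂ < j₂ := by
  unfold Overlap at h; omega

theorem Overlap.le_and_le {i₁ j₁ i₂ j₂ : ℤ} (h : Overlap i₁ j₁ i₂ j₂) : i₁ ≤ j₂ ∧ i₂ ≤ j₁ := by
  unfold Overlap at h; omega

theorem Overlap.nested_of_not_overlap {a b i j i' j' : ℤ} (h : Overlap i j i' j')
    (hai : a ≤ i) (hjb : j ≤ b) (hno : ¬ Overlap a b i' j') : a ≤ i' ∧ j' ≤ b := by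
  unfold Overlap at h hno; omega

theorem SegConnected.lt {n : ℕ} {ii jj : ℕ → ℤ} {a b s : ℕ} (hc : SegConnected n ii jj a b)
    (hab : a + 1 < b) (has : a + 1 ≤ s) (hsb : s ≤ b) : ii s < jj s := by
  rcases Nat.lt_or_ge s b with hs | hs
  · exact (hc s has hs).1.left_lt
  · obtain rfl : s = b := by omega
    have h := (hc (s - 1) (by omega) (by omega)).1
    rw [Nat.sub_add_cancel (by omega)] at h
    exact h.right_lt

theorem SegConnected.nested_of_not_overlap {n : ℕ} {ii jj : ℕ → ℤ} {p q : ℕ} {a b : ℤ}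
    (hc : SegConnected n ii jj p q)
    (hno : ∀ t, p + 1 ≤ t → t ≤ q → ¬ Overlap a b (ii t) (jj t))
    (hbase : a ≤ ii (p + 1) ∧ jj (p + 1) ≤ b) :
    ∀ t, p + 1 ≤ t → t ≤ q → a ≤ ii t ∧ jj t ≤ b := by
  intro t hpt
  induction t, hpt using Nat.le_induction with
  | base => exact fun _ => hbase
  | succ t hpt ih =>
    intro htq
    obtain ⟨hai, hjb⟩ := ih (by omega)
    exact (hc t hpt htq).1.nested_of_not_overlap hai hjb (hno (t + 1) (by omega) htq)

theorem stable_cond_iff_nested {a b c d : ℤ} (had : a ≤ d) (hcb : c ≤ b) :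
    ((c < a → d < a) ∧ (b < d → b < c)) ↔ a ≤ c ∧ d ≤ b := by
  omega

theorem stable_two_iff {rr : ℕ → ℕ} {ii jj : ℕ → ℤ} :
    Stable 2 rr ii jj ↔
      (ii (rr 1 + 1) < ii (rr 1 - 1) → jj (rr 1 + 1) < ii (rr 1 - 1)) ∧
      (jj (rr 1 - 1) < jj (rr 1 + 1) → jj (rr 1 - 1) < ii (rr 1 + 1)) := by
  refine ⟨fun h => h 1 le_rfl one_lt_two, fun h m hm1 hm2 => ?_⟩
  obtain rfl : m = 1 := by omega
  exact h

namespace IsAltSnake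

variable {n r k : ℕ} {rr : ℕ → ℕ} {ii jj : ℕ → ℤ}

theorem one_le_rr (h : IsAltSnake n r k rr ii jj) {m : ℕ} (hm : m ≤ k) : 1 ≤ rr m := by
  induction m with
  | zero => exact h.rr0.ge
  | succ m ih => exact (ih (by omega)).trans (h.rrmono m (by omega)).le

theorem turn (h : IsAltSnake n r k rr ii jj) {m : ℕ} (hm1 : 1 ≤ m) (hmk : m < k) :
    (ii (rr m - 1) < ii (rr m) ∧ jj (rr m - 1) < jj (rr m) ∧
        ii (rr m + 1) < ii (rr m) ∧ jj (rr m + 1) < jj (rr m)) ∨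
      (ii (rr m) < ii (rr m - 1) ∧ jj (rr m) < jj (rr m - 1) ∧
        ii (rr m) < ii (rr m + 1) ∧ jj (rr m) < jj (rr m + 1)) := by
  have hlo := h.one_le_rr (m := m - 1) (by omega)
  have hmono := h.rrmono (m - 1) (by omega)
  have hnext := h.rrmono m hmk
  rw [Nat.sub_add_cancel hm1] at hmono
  have hpred : rr m - 1 + 1 = rr m := by omega
  have halt := h.alt m hm1 hmk
  rcases h.mono m hm1 hmk.le with hR | hL
  · have hin := hR (rr m - 1) (by omega) (by omega)
    have hout := halt.mp hR (rr m) (by omega) (by omega)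
    rw [hpred] at hin
    exact .inl ⟨hin.1, hin.2, hout.1, hout.2⟩
  · have hR : SRight ii jj (rr m - 1) (rr (m + 1)) := by
      refine (h.mono (m + 1) (by omega) hmk).resolve_right fun hL' => ?_
      rw [Nat.add_sub_cancel] at hL'
      have h₁ := halt.mpr hL' (rr m - 1) (by omega) (by omega)
      have h₂ := hL (rr m - 1) (by omega) (by omega)
      omega
    have hin := hL (rr m - 1) (by omega) (by omega)
    have hout := hR (rr m) (by omega) (by omega)
    rw [hpred] at hin
    exact .inr ⟨hin.1, hin.2, hout.1, hout.2⟩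

theorem rr_one_bounds (h : IsAltSnake n r 2 rr ii jj) : 2 ≤ rr 1 ∧ rr 1 + 1 ≤ r := by
  have h₀ : rr 0 < rr 1 := h.rrmono 0 (by omega)
  have h₁ : rr 1 < rr 2 := h.rrmono 1 (by omega)
  have := h.rr0
  have := h.rrk
  omega

theorem neighbours_intersect (h : IsAltSnake n r 2 rr ii jj) (hc : SegConnected n ii jj 0 r) :
    ii (rr 1 - 1) ≤ jj (rr 1 + 1) ∧ ii (rr 1 + 1) ≤ jj (rr 1 - 1) := by
  obtain ⟨hr₁, hr₁r⟩ := h.rr_one_bounds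
  have hprev := (hc (rr 1 - 1) (by omega) (by omega)).1.le_and_le
  have hnext := (hc (rr 1) (by omega) hr₁r).1.le_and_le
  rw [Nat.sub_add_cancel (by omega)] at hprev
  rcases h.turn (m := 1) le_rfl one_lt_two with hpeak | hvalley <;> omega

end IsAltSnake

theorem stmt_10_general (n r : ℕ) (rr : ℕ → ℕ) (ii jj : ℕ → ℤ)
    (h : IsAltSnake n r 2 rr ii jj) (hc : SegConnected n ii jj 0 r) :
    (Stable 2 rr ii jj ↔
      (ii (rr 1 - 1) ≤ ii (rr 1 + 1) ∧ ii (rr 1 + 1) < jj (rr 1 + 1) ∧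
        jj (rr 1 + 1) ≤ jj (rr 1 - 1))) ∧
    (Stable 2 rr ii jj →
      ∀ s, rr 1 + 1 ≤ s → s ≤ rr 2 →
        ii (rr 1 - 1) ≤ ii s ∧ ii s ≤ jj s ∧ jj s ≤ jj (rr 1 - 1)) := by
  obtain ⟨hr₁, hr₁r⟩ := h.rr_one_bounds
  have hlt : ∀ s, 1 ≤ s → s ≤ r → ii s < jj s := fun s h₁ h₂ =>
    hc.lt (by omega) h₁ h₂
  obtain ⟨had, hcb⟩ := h.neighbours_intersect hc
  have hstable : Stable 2 rr ii jj ↔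
      ii (rr 1 - 1) ≤ ii (rr 1 + 1) ∧ jj (rr 1 + 1) ≤ jj (rr 1 - 1) :=
    stable_two_iff.trans (stable_cond_iff_nested had hcb)
  refine ⟨?_, fun hs s hs₁ hs₂ => ?_⟩
  · rw [hstable]
    have := hlt (rr 1 + 1) (by omega) hr₁r
    constructor <;> intro <;> omega
  · rw [h.rrk] at hs₂
    have htail : SegConnected n ii jj (rr 1) r := fun t _ ht => hc t (by omega) ht
    have hnested := htail.nested_of_not_overlap
      (fun t ht₁ ht₂ => h.nonoverlap 1 (rr 1 - 1) t le_rfl one_lt_two (by omega) (by omega)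
        (by omega) ht₂)
      (hstable.mp hs) s hs₁ hs₂
    exact ⟨hnested.1, (hlt s (by omega) hs₂).le, hnested.2⟩

/-- Proposition (structure1 (iv)): a connected alternating snake with
`r(𝐬) = (1, r_1, r_2)` is stable iff `i_{r_1−1} ≤ i_{r_1+1} < j_{r_1+1} ≤ j_{r_1−1}`;
and in that case `i_{r_1−1} ≤ i_s ≤ j_s ≤ j_{r_1−1}` for all `r_1 + 1 ≤ s ≤ r_2`. -/
theorem stmt_10 (n r : ℕ) (hn : 1 ≤ n) (rr : ℕ → ℕ) (ii jj : ℕ → ℤ)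
    (h : IsAltSnake n r 2 rr ii jj) (hc : SegConnected n ii jj 0 r) :
    (Stable 2 rr ii jj ↔
      (ii (rr 1 - 1) ≤ ii (rr 1 + 1) ∧ ii (rr 1 + 1) < jj (rr 1 + 1) ∧
        jj (rr 1 + 1) ≤ jj (rr 1 - 1))) ∧
    (Stable 2 rr ii jj →
      ∀ s, rr 1 + 1 ≤ s → s ≤ rr 2 →
        ii (rr 1 - 1) ≤ ii s ∧ ii s ≤ jj s ∧ jj s ≤ jj (rr 1 - 1)) :=
  stmt_10_general n r rr ii jj h hc

end AltSnakePaper
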